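/- Quasi-subterms of a normal form come from normalizing quasi-subterms: sub(⌈t⌉) ⊆ ⌈sub(t)⌉, where ⌈S⌉ denotes the image of a set S under normalization. -/
import Mathlib


inductive BinOp : Type
  | enc | aenc | pair | sig
deriving DecidableEq

inductive Term : Type
  | atom : ℕ → Term
  | var  : ℕ → Term
  | bin  : BinOp → Term → Term → Term
  | priv : Term → Term
  | aci  : List Term → Term

def Term.subst (σ : ℕ → Term) : Term → Term
  | .atom a => .atom a
  | .var x => σ x
  | .bin o p q => .bin o (p.subst σ) (q.subst σ)
  | .priv t => .priv (t.subst σ)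
  | .aci L => .aci (L.attach.map fun p => p.1.subst σ)
decreasing_by
  all_goals simp_wf
  all_goals first
    | omega
    | (have := List.sizeOf_lt_of_mem p.2; omega)

def Term.elems : Term → Set Term
  | .aci L => ⋃ p ∈ L.attach, p.1.elems
  | t => {t}
decreasing_by
  have := List.sizeOf_lt_of_mem p.2; simp_wf; omega

def Term.subDag : Term → Set Term
  | .atom a => {.atom a}
  | .var x => {.var x}
  | .bin o p q => insert (.bin o p q) (p.subDag ∪ q.subDag)
  | .priv t => insert (.priv t) t.subDag
  | .aci L => insert (.aci L) (⋃ p ∈ L.attach, p.1.subDag)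
decreasing_by
  all_goals simp_wf
  all_goals first
    | omega
    | (have := List.sizeOf_lt_of_mem p.2; omega)

def Term.vars (t : Term) : Set ℕ := {x | Term.var x ∈ t.subDag}

def Term.Ground (t : Term) : Prop := t.vars = ∅

/-- Specification of the quasi-subterm function `sub`. -/
structure SubSpec where
  sub : Term → Set Term
  sub_atom : ∀ a, sub (.atom a) = {.atom a}
  sub_var : ∀ x, sub (.var x) = {.var x}
  sub_priv : ∀ t, sub (.priv t) = insert (.priv t) (sub t)
  sub_bin : ∀ o p q, sub (.bin o p q) = insert (.bin o p q) (sub p ∪ sub q)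
  sub_aci : ∀ L, sub (.aci L) = insert (.aci L) (⋃ p ∈ (Term.aci L).elems, sub p)

/-- Specification of the ACI normal form with respect to a strict total order `lt`. -/
structure NormSpec (lt : Term → Term → Prop) where
  nf : Term → Term
  nf_atom : ∀ a, nf (.atom a) = .atom a
  nf_var  : ∀ x, nf (.var x) = .var x
  nf_bin  : ∀ o p q, nf (.bin o p q) = .bin o (nf p) (nf q)
  nf_priv : ∀ t, nf (.priv t) = .priv (nf t)
  nf_aci_single : ∀ L t', nf '' (Term.aci L).elems = {t'} → nf (.aci L) = t'
  nf_aci : ∀ L, (¬ ∃ t', nf '' (Term.aci L).elems = {t'}) →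
      ∃ L' : List Term, List.Pairwise lt L' ∧
        (∀ s, s ∈ L' ↔ s ∈ nf '' (Term.aci L).elems) ∧ nf (.aci L) = .aci L'

/-- The derivable closure of a set `E` of terms under a deduction system `R`,
given as a set of rules (premises, conclusion): the least superset of `E`
closed under the rules. -/
inductive Der (R : Set (Set Term × Term)) (E : Set Term) : Term → Prop where
  | base {t : Term} : t ∈ E → Der R E t
  | step {l : Set Term} {r : Term} : (l, r) ∈ R → (∀ s ∈ l, Der R E s) → Der R E r

/-- The composition rules of the DY+ACI deduction system (for normal form `nf`). -/
inductive DYComp (nf : Term → Term) : Set Term → Term → Prop where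
  | enc  (t₁ t₂ : Term) : DYComp nf {t₁, t₂} (nf (.bin .enc t₁ t₂))
  | aenc (t₁ t₂ : Term) : DYComp nf {t₁, t₂} (nf (.bin .aenc t₁ t₂))
  | pair (t₁ t₂ : Term) : DYComp nf {t₁, t₂} (nf (.bin .pair t₁ t₂))
  | sig  (t₁ t₂ : Term) : DYComp nf {t₁, .priv t₂} (nf (.bin .sig t₁ (.priv t₂)))
  | aci  (L : List Term) (h : L ≠ []) : DYComp nf {t | t ∈ L} (nf (.aci L))

/-- The composition rules of DY+ACI other than the ACI-set construction rule. -/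
inductive DYCompNoACI (nf : Term → Term) : Set Term → Term → Prop where
  | enc  (t₁ t₂ : Term) : DYCompNoACI nf {t₁, t₂} (nf (.bin .enc t₁ t₂))
  | aenc (t₁ t₂ : Term) : DYCompNoACI nf {t₁, t₂} (nf (.bin .aenc t₁ t₂))
  | pair (t₁ t₂ : Term) : DYCompNoACI nf {t₁, t₂} (nf (.bin .pair t₁ t₂))
  | sig  (t₁ t₂ : Term) : DYCompNoACI nf {t₁, .priv t₂} (nf (.bin .sig t₁ (.priv t₂)))

/-- The decomposition rules of the DY+ACI deduction system. -/
inductive DYDecomp (nf : Term → Term) : Set Term → Term → Prop where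
  | enc  (t₁ t₂ : Term) : DYDecomp nf {.bin .enc t₁ t₂, nf t₂} (nf t₁)
  | aenc (t₁ t₂ : Term) : DYDecomp nf {.bin .aenc t₁ t₂, nf (.priv t₂)} (nf t₁)
  | fst  (t₁ t₂ : Term) : DYDecomp nf {.bin .pair t₁ t₂} (nf t₁)
  | snd  (t₁ t₂ : Term) : DYDecomp nf {.bin .pair t₁ t₂} (nf t₂)
  | aci  (L : List Term) (t : Term) (h : t ∈ L) : DYDecomp nf {.aci L} (nf t)

/-- The DY+ACI deduction system as a set of rules. -/
def DYACI (nf : Term → Term) : Set (Set Term × Term) :=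
  {p | DYComp nf p.1 p.2 ∨ DYDecomp nf p.1 p.2}

/-- A ground substitution `σ` is a model of a constraint system
`S = {Eᵢ ▷ tᵢ}` if `⌈tᵢσ⌉` is derivable from `⌈Eᵢσ⌉` in DY+ACI. -/
def Models (nf : Term → Term) (σ : ℕ → Term) (S : List (Set Term × Term)) : Prop :=
  ∀ c ∈ S, Der (DYACI nf) (nf '' ((fun t => t.subst σ) '' c.1)) (nf (c.2.subst σ))

/-- All terms occurring in a constraint system. -/
def termsOf (S : List (Set Term × Term)) : Set Term :=
  ⋃ c ∈ S, c.1 ∪ {c.2}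

/-- DAG-subterms of a constraint system. -/
def subDagS (S : List (Set Term × Term)) : Set Term :=
  ⋃ t ∈ termsOf S, t.subDag

/-- Variables of a constraint system. -/
def varsS (S : List (Set Term × Term)) : Set ℕ :=
  {x | Term.var x ∈ subDagS S}

/-- Applying a substitution to a constraint system. -/
def substS (θ : ℕ → Term) (S : List (Set Term × Term)) : List (Set Term × Term) :=
  S.map fun c => ((fun t => t.subst θ) '' c.1, c.2.subst θ)

/-- The domain of a substitution. -/
def dom (θ : ℕ → Term) : Set ℕ := {x | θ x ≠ .var x}


lemma mem_elems_aci (L : List Term) (s : Term) :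
    s ∈ (Term.aci L).elems ↔ ∃ p ∈ L, s ∈ p.elems := by
  simp [Term.elems]

lemma elems_size : ∀ n (t : Term), sizeOf t ≤ n → ∀ s ∈ t.elems, sizeOf s ≤ sizeOf t := by
  intro n
  induction n using Nat.strong_induction_on with
  | _ n IH =>
    intro t ht s hs
    match t with
    | .atom a => simp_all [Term.elems]
    | .var x => simp_all [Term.elems]
    | .bin o p q => simp_all [Term.elems]
    | .priv u => simp_all [Term.elems]
    | .aci L =>
      rw [mem_elems_aci] at hs
      obtain ⟨p, hpL, hsp⟩ := hs
      have hp : sizeOf p < sizeOf (Term.aci L) := by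
        have := List.sizeOf_lt_of_mem hpL; simp; omega
      have h1 : sizeOf s ≤ sizeOf p :=
        IH (sizeOf p) (by omega) p le_rfl s hsp
      omega

lemma elems_not_aci : ∀ n (t : Term), sizeOf t ≤ n → ∀ s ∈ t.elems, ∀ L, s ≠ .aci L := by
  intro n
  induction n using Nat.strong_induction_on with
  | _ n IH =>
    intro t ht s hs L
    match t with
    | .atom a => simp_all [Term.elems]
    | .var x => simp_all [Term.elems]
    | .bin o p q => simp_all [Term.elems]
    | .priv u => simp_all [Term.elems]
    | .aci M =>
      rw [mem_elems_aci] at hs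
      obtain ⟨p, hpM, hsp⟩ := hs
      have hp : sizeOf p < sizeOf (Term.aci M) := by
        have := List.sizeOf_lt_of_mem hpM; simp; omega
      exact IH (sizeOf p) (by omega) p le_rfl s hsp L

lemma elems_nf_single {lt : Term → Term → Prop} (N : NormSpec lt) (u : Term)
    (h : ∀ L, u ≠ .aci L) : (N.nf u).elems = {N.nf u} := by
  match u with
  | .atom a => rw [N.nf_atom]; simp [Term.elems]
  | .var x => rw [N.nf_var]; simp [Term.elems]
  | .bin o p q => rw [N.nf_bin]; simp [Term.elems]
  | .priv t => rw [N.nf_priv]; simp [Term.elems]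
  | .aci L => exact absurd rfl (h L)

/-- Quasi-subterms of a normal form come from normalizing quasi-subterms. -/
theorem sub_norm_subset (lt : Term → Term → Prop) (hlt : IsStrictTotalOrder Term lt)
    (N : NormSpec lt) (Sp : SubSpec) :
    ∀ t : Term, Sp.sub (N.nf t) ⊆ N.nf '' Sp.sub t := by
  have main : ∀ n (t : Term), sizeOf t ≤ n → Sp.sub (N.nf t) ⊆ N.nf '' Sp.sub t := by
    intro n
    induction n using Nat.strong_induction_on with
    | _ n IH =>
      intro t ht
      match t with
      | .atom a =>
        rw [N.nf_atom, Sp.sub_atom]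
        intro s hs
        exact ⟨.atom a, by simp [Sp.sub_atom], by simp at hs; rw [hs, N.nf_atom]⟩
      | .var x =>
        rw [N.nf_var, Sp.sub_var]
        intro s hs
        exact ⟨.var x, by simp [Sp.sub_var], by simp at hs; rw [hs, N.nf_var]⟩
      | .bin o p q =>
        have hp : sizeOf p < sizeOf (Term.bin o p q) := by first | (simp; omega) | simp
        have hq : sizeOf q < sizeOf (Term.bin o p q) := by first | (simp; omega) | simp
        rw [N.nf_bin, Sp.sub_bin, Sp.sub_bin]
        intro s hs
        rcases hs with hs | hs | hs
        · exact ⟨.bin o p q, Set.mem_insert _ _, by rw [N.nf_bin, hs]⟩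
        · obtain ⟨u, hu, hus⟩ := IH (sizeOf p) (by omega) p le_rfl hs
          exact ⟨u, Set.mem_insert_of_mem _ (Or.inl hu), hus⟩
        · obtain ⟨u, hu, hus⟩ := IH (sizeOf q) (by omega) q le_rfl hs
          exact ⟨u, Set.mem_insert_of_mem _ (Or.inr hu), hus⟩
      | .priv v =>
        have hv : sizeOf v < sizeOf (Term.priv v) := by first | (simp; omega) | simp
        rw [N.nf_priv, Sp.sub_priv, Sp.sub_priv]
        intro s hs
        rcases hs with hs | hs
        · exact ⟨.priv v, Set.mem_insert _ _, by rw [N.nf_priv, hs]⟩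
        · obtain ⟨u, hu, hus⟩ := IH (sizeOf v) (by omega) v le_rfl hs
          exact ⟨u, Set.mem_insert_of_mem _ hu, hus⟩
      | .aci L =>
        have hsize : ∀ u ∈ (Term.aci L).elems, sizeOf u < sizeOf (Term.aci L) := by
          intro u hu
          rw [mem_elems_aci] at hu
          obtain ⟨p, hpL, hup⟩ := hu
          have hp : sizeOf p < sizeOf (Term.aci L) := by
            have := List.sizeOf_lt_of_mem hpL; simp; omega
          have := elems_size (sizeOf p) p le_rfl u hup
          omega
        have hsubmem : ∀ u ∈ (Term.aci L).elems, Sp.sub u ⊆ Sp.sub (.aci L) := by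
          intro u hu s hs
          rw [Sp.sub_aci]
          exact Set.mem_insert_of_mem _ (Set.mem_biUnion hu hs)
        by_cases hsing : ∃ t', N.nf '' (Term.aci L).elems = {t'}
        · obtain ⟨t', ht'⟩ := hsing
          rw [N.nf_aci_single L t' ht']
          have : t' ∈ N.nf '' (Term.aci L).elems := by rw [ht']; rfl
          obtain ⟨u, hu, hut⟩ := this
          subst hut
          intro s hs
          obtain ⟨w, hw, hws⟩ := IH (sizeOf u) (by have := hsize u hu; omega) u le_rfl hs
          exact ⟨w, hsubmem u hu hw, hws⟩
        · obtain ⟨L', hpw, hmem, heq⟩ := N.nf_aci L hsing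
          rw [heq, Sp.sub_aci]
          intro s hs
          rcases hs with hs | hs
          · refine ⟨.aci L, ?_, by rw [heq, hs]⟩
            rw [Sp.sub_aci]; exact Set.mem_insert _ _
          · simp only [Set.mem_iUnion] at hs
            obtain ⟨p, hp, hsp⟩ := hs
            rw [mem_elems_aci] at hp
            obtain ⟨q, hqL', hpq⟩ := hp
            have hq : q ∈ N.nf '' (Term.aci L).elems := (hmem q).1 hqL'
            obtain ⟨u, hu, huq⟩ := hq
            have hnotaci : ∀ M, u ≠ .aci M :=
              elems_not_aci (sizeOf (Term.aci L)) (Term.aci L) le_rfl u hu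
            have hq_elems : q.elems = {q} := huq ▸ elems_nf_single N u hnotaci
            rw [hq_elems] at hpq
            rw [Set.mem_singleton_iff] at hpq
            subst hpq
            obtain ⟨w, hw, hws⟩ := IH (sizeOf u) (by have := hsize u hu; omega) u le_rfl
              (huq ▸ hsp)
            exact ⟨w, hsubmem u hu hw, hws⟩
  intro t
  exact main (sizeOf t) t le_rfl
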